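/- Let A, B be nonempty subsets of a normed space X and T a p-cyclic φ-contraction mapping. For (x₀,y₀) ∈ A × B define x_n = T(x_{n-1}, y_{n-1}) and y_n = T(y_{n-1}, x_{n-1}). Then ‖(x_n, y_n) − (x_{n+1}, y_{n+1})‖ → dist(A,B) as n → ∞. -/

import Mathlib

/-! The coupled iteration `(xₙ₊₁, yₙ₊₁) = (T xₙ yₙ, T yₙ xₙ)` is the orbit of the map
`F (x, y) = (T x y, T y x)` of `X × X`, which is itself a φ-contraction from `A × B` to `B × A`.
So `Dₙ = ‖(xₙ, yₙ) - (xₙ₊₁, yₙ₊₁)‖` satisfies `dist(A,B) ≤ Dₙ` and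
`Dₙ₊₁ ≤ Dₙ - φ Dₙ + φ dist(A,B)`. Hence `Dₙ` decreases to some `L`, and
`φ L - φ dist(A,B) ≤ Dₙ - Dₙ₊₁ → 0` forces `L = dist(A,B)` by strict monotonicity of `φ`. -/

open Filter Topology

/-- `setDist A B = inf {‖a - b‖ : a ∈ A, b ∈ B}`. -/
noncomputable def setDist {X : Type*} [NormedAddCommGroup X] (A B : Set X) : ℝ :=
  sInf {d : ℝ | ∃ a ∈ A, ∃ b ∈ B, d = ‖a - b‖}

section SetDist

variable {X : Type*} [NormedAddCommGroup X]

lemma setDist_nonneg (A B : Set X) : 0 ≤ setDist A B :=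
  Real.sInf_nonneg (by rintro _ ⟨a, -, b, -, rfl⟩; exact norm_nonneg _)

lemma setDist_le_norm_sub {A B : Set X} {a b : X} (ha : a ∈ A) (hb : b ∈ B) :
    setDist A B ≤ ‖a - b‖ :=
  csInf_le ⟨0, by rintro _ ⟨a, -, b, -, rfl⟩; exact norm_nonneg _⟩ ⟨a, ha, b, hb, rfl⟩

end SetDist

theorem tendsto_of_forall_succ_le_sub_add {D : ℕ → ℝ} {φ : ℝ → ℝ} {d : ℝ}
    (hφ : StrictMonoOn φ (Set.Ici d)) (hd : ∀ n, d ≤ D n)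
    (hstep : ∀ n, D (n + 1) ≤ D n - φ (D n) + φ d) :
    Tendsto D atTop (𝓝 d) := by
  have hanti : Antitone D := antitone_nat_of_succ_le fun n => by
    linarith [hstep n, hφ.monotoneOn Set.self_mem_Ici (hd n) (hd n)]
  have hbdd : BddBelow (Set.range D) := ⟨d, Set.forall_mem_range.2 hd⟩
  have hL : Tendsto D atTop (𝓝 (⨅ n, D n)) := tendsto_atTop_ciInf hanti hbdd
  suffices ⨅ n, D n = d by rwa [this] at hL
  by_contra hne
  have hdL : d < ⨅ n, D n := (le_ciInf hd).lt_of_ne' hne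
  have hgap : ∀ n, φ (⨅ n, D n) - φ d ≤ D n - D (n + 1) := fun n => by
    linarith [hstep n, hφ.monotoneOn hdL.le (hd n) (ciInf_le hbdd n)]
  have hdiff : Tendsto (fun n => D n - D (n + 1)) atTop (𝓝 0) := by
    simpa using hL.sub (hL.comp (tendsto_add_atTop_nat 1))
  linarith [ge_of_tendsto' hdiff hgap, hφ Set.self_mem_Ici hdL.le hdL]

section Coupled

variable {X : Type*} {A B : Set X} {T : X → X → X}

def coupledMap (T : X → X → X) (p : X × X) : X × X := (T p.1 p.2, T p.2 p.1)

lemma coupledMap_mem_prod (hTB : ∀ x ∈ A, ∀ y ∈ B, T x y ∈ B) (hTA : ∀ x ∈ B, ∀ y ∈ A, T x y ∈ A)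
    {p : X × X} (hp : p ∈ A ×ˢ B) : coupledMap T p ∈ B ×ˢ A :=
  ⟨hTB _ hp.1 _ hp.2, hTA _ hp.2 _ hp.1⟩

lemma coupledMap_mem_union (hTB : ∀ x ∈ A, ∀ y ∈ B, T x y ∈ B)
    (hTA : ∀ x ∈ B, ∀ y ∈ A, T x y ∈ A) {p : X × X} (hp : p ∈ A ×ˢ B ∪ B ×ˢ A) :
    coupledMap T p ∈ A ×ˢ B ∪ B ×ˢ A := by
  rcases hp with hp | hp
  · exact Or.inr (coupledMap_mem_prod hTB hTA hp)
  · exact Or.inl (coupledMap_mem_prod hTA hTB hp)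

variable [NormedAddCommGroup X]

def CyclicPhiContractive (A B : Set X) (T : X → X → X) (φ : ℝ → ℝ) : Prop :=
  ∀ x₁ ∈ A, ∀ y₁ ∈ B, ∀ x₂ ∈ B, ∀ y₂ ∈ A,
    ‖T x₁ y₁ - T x₂ y₂‖ ≤ ‖((x₁, y₁) : X × X) - (x₂, y₂)‖
      - φ ‖((x₁, y₁) : X × X) - (x₂, y₂)‖ + φ (setDist A B)

lemma norm_swap_sub_swap (p q : X × X) : ‖p.swap - q.swap‖ = ‖p - q‖ := by
  simp only [Prod.norm_def, Prod.fst_sub, Prod.snd_sub, Prod.fst_swap, Prod.snd_swap, max_comm]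

lemma setDist_le_norm_sub_of_mem_prod {p q : X × X} (hp : p ∈ A ×ˢ B) (hq : q ∈ B ×ˢ A) :
    setDist A B ≤ ‖p - q‖ :=
  (setDist_le_norm_sub hp.1 hq.1).trans (norm_fst_le (p - q))

lemma norm_coupledMap_sub_le {φ : ℝ → ℝ}
    (hT : CyclicPhiContractive A B T φ)
    {p q : X × X} (hp : p ∈ A ×ˢ B) (hq : q ∈ B ×ˢ A) :
    ‖coupledMap T p - coupledMap T q‖ ≤ ‖p - q‖ - φ ‖p - q‖ + φ (setDist A B) := by
  have hswap : ‖q.swap - p.swap‖ = ‖p - q‖ := by rw [norm_swap_sub_swap, norm_sub_rev]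
  rw [Prod.norm_def, max_le_iff]
  constructor
  · exact hT _ hp.1 _ hp.2 _ hq.1 _ hq.2
  · rw [Prod.snd_sub, norm_sub_rev, ← hswap]
    exact hT _ hq.2 _ hq.1 _ hp.2 _ hp.1

lemma setDist_le_norm_sub_coupledMap (hTB : ∀ x ∈ A, ∀ y ∈ B, T x y ∈ B)
    (hTA : ∀ x ∈ B, ∀ y ∈ A, T x y ∈ A) {p : X × X} (hp : p ∈ A ×ˢ B ∪ B ×ˢ A) :
    setDist A B ≤ ‖p - coupledMap T p‖ := by
  rcases hp with hp | hp
  · exact setDist_le_norm_sub_of_mem_prod hp (coupledMap_mem_prod hTB hTA hp)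
  · rw [norm_sub_rev]
    exact setDist_le_norm_sub_of_mem_prod (coupledMap_mem_prod hTA hTB hp) hp

lemma norm_coupledMap_sub_coupledMap_le {φ : ℝ → ℝ} (hTB : ∀ x ∈ A, ∀ y ∈ B, T x y ∈ B)
    (hTA : ∀ x ∈ B, ∀ y ∈ A, T x y ∈ A)
    (hT : CyclicPhiContractive A B T φ)
    {p : X × X} (hp : p ∈ A ×ˢ B ∪ B ×ˢ A) :
    ‖coupledMap T p - coupledMap T (coupledMap T p)‖ ≤
      ‖p - coupledMap T p‖ - φ ‖p - coupledMap T p‖ + φ (setDist A B) := by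
  rcases hp with hp | hp
  · exact norm_coupledMap_sub_le hT hp (coupledMap_mem_prod hTB hTA hp)
  · rw [norm_sub_rev, norm_sub_rev p]
    exact norm_coupledMap_sub_le hT (coupledMap_mem_prod hTA hTB hp) hp

theorem tendsto_norm_sub_succ_setDist {φ : ℝ → ℝ} (hφ : StrictMonoOn φ (Set.Ici (setDist A B)))
    (hTB : ∀ x ∈ A, ∀ y ∈ B, T x y ∈ B) (hTA : ∀ x ∈ B, ∀ y ∈ A, T x y ∈ A)
    (hT : CyclicPhiContractive A B T φ)
    {z : ℕ → X × X} (hz0 : z 0 ∈ A ×ˢ B) (hz : ∀ n, z (n + 1) = coupledMap T (z n)) :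
    Tendsto (fun n => ‖z n - z (n + 1)‖) atTop (𝓝 (setDist A B)) := by
  have hmem : ∀ n, z n ∈ A ×ˢ B ∪ B ×ˢ A := by
    intro n
    induction n with
    | zero => exact Or.inl hz0
    | succ n ih => exact hz n ▸ coupledMap_mem_union hTB hTA ih
  refine tendsto_of_forall_succ_le_sub_add hφ (fun n => ?_) (fun n => ?_)
  · rw [hz]
    exact setDist_le_norm_sub_coupledMap hTB hTA (hmem n)
  · rw [hz, hz (n + 1), hz]
    exact norm_coupledMap_sub_coupledMap_le hTB hTA hT (hmem n)

end Coupled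

theorem stmt3_general {X : Type*} [NormedAddCommGroup X]
    (A B : Set X)
    (T : X → X → X) (φ : ℝ → ℝ)
    (hφmono : StrictMonoOn φ (Set.Ici 0))
    (hTB : ∀ x ∈ A, ∀ y ∈ B, T x y ∈ B)
    (hTA : ∀ x ∈ B, ∀ y ∈ A, T x y ∈ A)
    (hT : ∀ x₁ ∈ A, ∀ y₁ ∈ B, ∀ x₂ ∈ B, ∀ y₂ ∈ A,
      ‖T x₁ y₁ - T x₂ y₂‖ ≤ ‖((x₁, y₁) : X × X) - (x₂, y₂)‖
        - φ ‖((x₁, y₁) : X × X) - (x₂, y₂)‖ + φ (setDist A B))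
    (x y : ℕ → X) (hx0 : x 0 ∈ A) (hy0 : y 0 ∈ B)
    (hx : ∀ n, x (n + 1) = T (x n) (y n))
    (hy : ∀ n, y (n + 1) = T (y n) (x n)) :
    Tendsto (fun n : ℕ => ‖((x n, y n) : X × X) - (x (n + 1), y (n + 1))‖)
      atTop (𝓝 (setDist A B)) :=
  tendsto_norm_sub_succ_setDist (hφmono.mono (Set.Ici_subset_Ici.2 (setDist_nonneg A B)))
    hTB hTA hT (z := fun n => (x n, y n)) ⟨hx0, hy0⟩ fun n => Prod.ext (hx n) (hy n)

theorem stmt3 {X : Type*} [NormedAddCommGroup X] [NormedSpace ℝ X]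
    (A B : Set X) (hA : A.Nonempty) (hB : B.Nonempty)
    (T : X → X → X) (φ : ℝ → ℝ)
    (hφmono : StrictMonoOn φ (Set.Ici 0)) (hφpos : ∀ t ≥ (0:ℝ), 0 ≤ φ t)
    (hTB : ∀ x ∈ A, ∀ y ∈ B, T x y ∈ B)
    (hTA : ∀ x ∈ B, ∀ y ∈ A, T x y ∈ A)
    (hT : ∀ x₁ ∈ A, ∀ y₁ ∈ B, ∀ x₂ ∈ B, ∀ y₂ ∈ A,
      ‖T x₁ y₁ - T x₂ y₂‖ ≤ ‖((x₁, y₁) : X × X) - (x₂, y₂)‖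
        - φ ‖((x₁, y₁) : X × X) - (x₂, y₂)‖ + φ (setDist A B))
    (x y : ℕ → X) (hx0 : x 0 ∈ A) (hy0 : y 0 ∈ B)
    (hx : ∀ n, x (n + 1) = T (x n) (y n))
    (hy : ∀ n, y (n + 1) = T (y n) (x n)) :
    Tendsto (fun n : ℕ => ‖((x n, y n) : X × X) - (x (n + 1), y (n + 1))‖)
      atTop (𝓝 (setDist A B)) :=
  stmt3_general A B T φ hφmono hTB hTA hT x y hx0 hy0 hx hy
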